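/- arXiv:2403.12249 — 2 statements merged into one kernel-verified Lean document; each statement's English description precedes it below -/
import Mathlib

section
/- Let r1, r2, c1 be real numbers with 0 < r1 < r2 and 2*sqrt(r2) < c1 < 2*(sqrt(r1) + sqrt(r2 - r1)). Define λ* = c1/2 - sqrt(r2 - r1) and σ = λ* + r1/λ*. Then 2*sqrt(r1) < σ < min(c1, 2*sqrt(r2)). -/
theorem stmt_1 (r1 r2 c1 lam σ : ℝ)
    (hr1 : 0 < r1) (hr12 : r1 < r2)
    (hc1 : 2 * Real.sqrt r2 < c1)
    (hc2 : c1 < 2 * (Real.sqrt r1 + Real.sqrt (r2 - r1)))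
    (hlam : lam = c1 / 2 - Real.sqrt (r2 - r1))
    (hσ : σ = lam + r1 / lam) :
    2 * Real.sqrt r1 < σ ∧ σ < min c1 (2 * Real.sqrt r2) := by
  have hr2 : 0 < r2 := hr1.trans hr12
  have ht2 : Real.sqrt r1 ^ 2 = r1 := Real.sq_sqrt hr1.le
  have hs2 : Real.sqrt (r2 - r1) ^ 2 = r2 - r1 := Real.sq_sqrt (by linarith)
  have hu2 : Real.sqrt r2 ^ 2 = r2 := Real.sq_sqrt hr2.le
  have ht0 : 0 < Real.sqrt r1 := Real.sqrt_pos.2 hr1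
  have hs0 : 0 < Real.sqrt (r2 - r1) := Real.sqrt_pos.2 (by linarith)
  have hu0 : 0 < Real.sqrt r2 := Real.sqrt_pos.2 hr2
  have hus : Real.sqrt (r2 - r1) < Real.sqrt r2 :=
    Real.sqrt_lt_sqrt (by linarith) (by linarith)
  have hlam1 : Real.sqrt r2 - Real.sqrt (r2 - r1) < lam := by rw [hlam]; linarith
  have hlam2 : lam < Real.sqrt r1 := by rw [hlam]; linarith
  have hlam0 : 0 < lam := by linarith
  have hdiv : r1 / lam * lam = r1 := div_mul_cancel₀ _ hlam0.ne'
  refine ⟨?_, ?_⟩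
  · rw [hσ]
    nlinarith [mul_pos (sub_pos.2 hlam2) (sub_pos.2 hlam2), hdiv, hlam0]
  · have htu : Real.sqrt r1 < Real.sqrt r2 := Real.sqrt_lt_sqrt hr1.le hr12
    have h2 : 0 < Real.sqrt r2 + Real.sqrt (r2 - r1) - lam := by linarith
    have hc : c1 = 2 * lam + 2 * Real.sqrt (r2 - r1) := by rw [hlam]; ring
    rw [lt_min_iff]
    constructor
    · rw [hσ, hc]
      nlinarith [mul_pos (show 0 < lam + Real.sqrt (r2 - r1) - Real.sqrt r2 by linarith)
        (show 0 < lam + Real.sqrt (r2 - r1) + Real.sqrt r2 by linarith), hdiv, hlam0]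
    · rw [hσ]
      nlinarith [mul_pos (show 0 < lam - (Real.sqrt r2 - Real.sqrt (r2 - r1)) by linarith) h2,
        hdiv, hlam0]
end

section
/- Let r1, r2, c1 be positive reals with r1 < r2 and 2*sqrt(r2) < c1 < 2*(sqrt(r1) + sqrt(r2 - r1)), λ* = c1/2 - sqrt(r2 - r1), and ρ̂ defined piecewise as: ρ̂(s) = s^2/4 - r2 for s > c1; ρ̂(s) = λ*·s - ((λ*)^2 + r1) for λ* + r1/λ* < s ≤ c1; ρ̂(s) = 0 for 0 ≤ s ≤ λ* + r1/λ*. Then ρ̂ is monotone non-decreasing on [0, ∞), and ρ̂(s) = 0 if and only if 0 ≤ s ≤ λ* + r1/λ*. -/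
set_option maxHeartbeats 1000000


theorem stmt_6 (r1 r2 c1 lam : ℝ)
    (hr1 : 0 < r1) (hr2 : 0 < r2) (hc : 0 < c1) (hr12 : r1 < r2)
    (hc1 : 2 * Real.sqrt r2 < c1)
    (hc2 : c1 < 2 * (Real.sqrt r1 + Real.sqrt (r2 - r1)))
    (hlam : lam = c1 / 2 - Real.sqrt (r2 - r1))
    (ρ : ℝ → ℝ)
    (hρ : ∀ s : ℝ, ρ s =
      if c1 < s then s ^ 2 / 4 - r2
      else if lam + r1 / lam < s then lam * s - (lam ^ 2 + r1)
      else 0) :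
    MonotoneOn ρ (Set.Ici 0) ∧
      ∀ s : ℝ, 0 ≤ s → (ρ s = 0 ↔ s ≤ lam + r1 / lam) := by
  have hs2 : Real.sqrt (r2 - r1) ^ 2 = r2 - r1 := Real.sq_sqrt (by linarith)
  have hs2' : Real.sqrt (r2 - r1) ≤ Real.sqrt r2 := Real.sqrt_le_sqrt (by linarith)
  have hr2sq : Real.sqrt r2 ^ 2 = r2 := Real.sq_sqrt hr2.le
  have hr2nn : 0 ≤ Real.sqrt r2 := Real.sqrt_nonneg _
  have hlam0 : 0 < lam := by rw [hlam]; linarith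
  have hlamne : lam ≠ 0 := ne_of_gt hlam0
  have key : lam + Real.sqrt (r2 - r1) = c1 / 2 := by rw [hlam]; ring
  have hc1sq : r2 < (c1 / 2) ^ 2 := by nlinarith [hr2sq, hr2nn, hc1]
  have hMval : lam * (lam + r1 / lam) = lam ^ 2 + r1 := by
    field_simp
  have hMlt : lam + r1 / lam < c1 := by
    have h : r1 / lam < c1 - lam := by
      rw [div_lt_iff₀ hlam0]
      nlinarith [hs2, key, hc1sq]
    linarith
  have hMpos : 0 < lam + r1 / lam := by positivity
  have hcont : lam * c1 - (lam ^ 2 + r1) = c1 ^ 2 / 4 - r2 := by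
    have hsq : Real.sqrt (r2 - r1) = c1 / 2 - lam := by linarith
    rw [hsq] at hs2
    linear_combination -hs2
  constructor
  · intro a ha b hb hab
    simp only [Set.mem_Ici] at ha hb
    rw [hρ a, hρ b]
    by_cases hbc : c1 < b
    · rw [if_pos hbc]
      by_cases hac : c1 < a
      · rw [if_pos hac]
        nlinarith [hab, hac, hc]
      · rw [if_neg hac]
        push_neg at hac
        by_cases haM : lam + r1 / lam < a
        · rw [if_pos haM]
          have h1 : lam * a ≤ lam * c1 := mul_le_mul_of_nonneg_left hac hlam0.le
          nlinarith [hcont, hbc, hc]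
        · rw [if_neg haM]
          nlinarith [hr2sq, hr2nn, hc1, hbc]
    · rw [if_neg hbc]
      push_neg at hbc
      have hac : ¬ c1 < a := not_lt.mpr (hab.trans hbc)
      rw [if_neg hac]
      by_cases hbM : lam + r1 / lam < b
      · rw [if_pos hbM]
        by_cases haM : lam + r1 / lam < a
        · rw [if_pos haM]
          have h2 : lam * a ≤ lam * b := mul_le_mul_of_nonneg_left hab hlam0.le
          linarith
        · rw [if_neg haM]
          have h2 : lam * (lam + r1 / lam) ≤ lam * b :=
            mul_le_mul_of_nonneg_left hbM.le hlam0.le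
          linarith [hMval, h2]
      · rw [if_neg hbM]
        have haM : ¬ lam + r1 / lam < a := fun h => hbM (h.trans_le hab)
        rw [if_neg haM]
  · intro s hs
    rw [hρ s]
    constructor
    · intro h
      by_contra hM
      push_neg at hM
      by_cases hsc : c1 < s
      · rw [if_pos hsc] at h
        nlinarith [hr2sq, hr2nn, hc1, hsc]
      · rw [if_neg hsc, if_pos hM] at h
        have h2 : lam * (lam + r1 / lam) < lam * s :=
          mul_lt_mul_of_pos_left hM hlam0
        linarith [hMval, h2]
    · intro h
      rw [if_neg (not_lt.mpr (h.trans hMlt.le)), if_neg (not_lt.mpr h)]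
end
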